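/- Suppose the naive primal-dual maximum-weight matching algorithm is run on a bipartite graph with all edge weights integer multiples of a fixed α > 0, starting from the potential π(v) = max edge weight for v ∈ L and π(v) = 0 for v ∈ R. Then throughout the execution every potential value π(v) is a nonnegative integer multiple of α, and each dual adjustment strictly decreases the total potential Σ_v π(v) by at least α; hence the algorithm terminates. -/

import Mathlib

open Finset

def IsGraph {V : Type*} (G : Finset (Finset V)) : Prop := ∀ e ∈ G, e.card = 2

open scoped Classical in
/-- `Γ_π(S)`: the vertices outside `S` joined to a vertex of `S` by a tight edge. -/
noncomputable def tightNbhd {V : Type*} [DecidableEq V]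
    (G : Finset (Finset V)) (w : Finset V → ℝ) (π : V → ℝ) (S : Finset V) : Finset V :=
  (G.biUnion id).filter
    (fun v => v ∉ S ∧ ∃ e ∈ G, v ∈ e ∧ (∑ x ∈ e, π x) = w e ∧ ∃ u ∈ e, u ∈ S)

/-! Slacks of edges and potentials are ℕ-multiples of `α`, hence so is the step size `ε`; being
positive, it is at least `α`. Lowering the potential by `ε` on `X` and raising it by `ε` on the
strictly smaller set `Γ_π(X)` keeps every value a nonnegative multiple of `α` (on `X` because
`ε ≤ π`), and lowers the total by `(|X| - |Γ_π(X)|) ε ≥ α`. -/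

namespace AddSubmonoid

theorem mem_multiples_iff_exists_natCast_mul {R : Type*} [NonAssocSemiring R] {x a : R} :
    x ∈ multiples a ↔ ∃ k : ℕ, x = k * a := by
  simp only [mem_multiples_iff, nsmul_eq_mul, eq_comm]

variable {M : Type*} [AddCommGroup M] [LinearOrder M] [IsOrderedAddMonoid M] {a x y : M}

theorem sub_mem_multiples (ha : 0 < a) (hx : x ∈ multiples a) (hy : y ∈ multiples a)
    (hyx : y ≤ x) : x - y ∈ multiples a := by
  obtain ⟨m, rfl⟩ := (mem_multiples_iff _ _).mp hx
  obtain ⟨n, rfl⟩ := (mem_multiples_iff _ _).mp hy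
  have hnm : n ≤ m := (nsmul_le_nsmul_iff_left ha).mp hyx
  exact (mem_multiples_iff _ _).mpr ⟨m - n, by rw [sub_nsmul a hnm, sub_eq_add_neg]⟩

theorem le_of_mem_multiples_of_pos (hx : x ∈ multiples a) (hpos : 0 < x) : a ≤ x := by
  obtain ⟨n, rfl⟩ := (mem_multiples_iff _ _).mp hx
  have ha : 0 ≤ a := le_of_not_ge fun ha => (nsmul_nonpos ha n).not_gt hpos
  have hn : 1 ≤ n := Nat.one_le_iff_ne_zero.mpr (by rintro rfl; simp at hpos)
  simpa using nsmul_le_nsmul_left ha hn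

end AddSubmonoid

open AddSubmonoid

section DualAdjust

variable {V M : Type*} [DecidableEq V]

def dualAdjust [AddGroup M] (X Y : Finset V) (ε : M) (f : V → M) (v : V) : M :=
  if v ∈ X then f v - ε else if v ∈ Y then f v + ε else f v

theorem dualAdjust_mem_multiples [AddCommGroup M] [LinearOrder M] [IsOrderedAddMonoid M]
    {X Y : Finset V} {ε a : M} {f : V → M} (ha : 0 < a) (hf : ∀ v, f v ∈ multiples a)
    (hε : ε ∈ multiples a) (hεX : ∀ v ∈ X, ε ≤ f v) (v : V) :
    dualAdjust X Y ε f v ∈ multiples a := by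
  unfold dualAdjust
  split_ifs with hX hY
  · exact sub_mem_multiples ha (hf v) hε (hεX v hX)
  · exact add_mem (hf v) hε
  · exact hf v

theorem sum_dualAdjust [AddCommGroup M] {S X Y : Finset V} (hXY : Disjoint X Y)
    (hXS : X ⊆ S) (hYS : Y ⊆ S) (ε : M) (f : V → M) :
    ∑ v ∈ S, dualAdjust X Y ε f v = ∑ v ∈ S, f v - #X • ε + #Y • ε := by
  have hsplit : ∀ v, dualAdjust X Y ε f v
      = f v - (if v ∈ X then ε else 0) + (if v ∈ Y then ε else 0) := by
    intro v
    unfold dualAdjust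
    by_cases hX : v ∈ X
    · simp [hX, Finset.disjoint_left.mp hXY hX]
    · by_cases hY : v ∈ Y <;> simp [hX, hY]
  simp only [hsplit, sum_add_distrib, sum_sub_distrib, sum_ite_mem, inter_eq_right.mpr hXS,
    inter_eq_right.mpr hYS, sum_const]

theorem sum_dualAdjust_le_sub [AddCommGroup M] [PartialOrder M] [IsOrderedAddMonoid M]
    {S X Y : Finset V} {ε a : M} (hXY : Disjoint X Y) (hXS : X ⊆ S) (hYS : Y ⊆ S)
    (hcard : #Y < #X) (haε : a ≤ ε) (hε : 0 ≤ ε) (f : V → M) :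
    ∑ v ∈ S, dualAdjust X Y ε f v ≤ ∑ v ∈ S, f v - a := by
  have hsmul : #Y • ε + ε ≤ #X • ε := by
    simpa [succ_nsmul] using nsmul_le_nsmul_left hε (Nat.succ_le_of_lt hcard)
  rw [sum_dualAdjust hXY hXS hYS]
  calc ∑ v ∈ S, f v - #X • ε + #Y • ε = ∑ v ∈ S, f v - (#X • ε - #Y • ε) := by abel
    _ ≤ ∑ v ∈ S, f v - ε := sub_le_sub_left (le_sub_iff_add_le'.mpr hsmul) _
    _ ≤ ∑ v ∈ S, f v - a := sub_le_sub_left haε _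

end DualAdjust

theorem disjoint_tightNbhd {V : Type*} [DecidableEq V] (G : Finset (Finset V))
    (w : Finset V → ℝ) (π : V → ℝ) (S : Finset V) : Disjoint S (tightNbhd G w π S) :=
  Finset.disjoint_right.mpr fun _ hv => (Finset.mem_filter.mp hv).2.1

theorem tightNbhd_subset {V : Type*} [DecidableEq V] (G : Finset (Finset V))
    (w : Finset V → ℝ) (π : V → ℝ) (S : Finset V) : tightNbhd G w π S ⊆ G.biUnion id :=
  Finset.filter_subset _ _

theorem naive_pd_adjustment_multiples_and_decrease_general
    {V : Type*} [DecidableEq V]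
    (G : Finset (Finset V))
    (w : Finset V → ℝ) (α : ℝ) (hα : 0 < α)
    (hw : ∀ e ∈ G, ∃ k : ℕ, w e = k * α)
    (π : V → ℝ)
    (hmult : ∀ v, ∃ k : ℕ, π v = k * α)
    (X : Finset V) (hXV : X ⊆ G.biUnion id)
    (hXpos : ∀ v ∈ X, 0 < π v)
    (hdef : (tightNbhd G w π X).card < X.card)
    (ε : ℝ)
    (hε : IsLeast
      {r : ℝ |
        (∃ e ∈ G, (∃ u ∈ e, u ∈ X) ∧ (∃ v ∈ e, v ∉ X ∧ v ∉ tightNbhd G w π X) ∧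
          r = (∑ x ∈ e, π x) - w e ∧ 0 < r) ∨
        (∃ v ∈ X, r = π v)} ε)
    (π' : V → ℝ)
    (hπ' : ∀ v, π' v =
      if v ∈ X then π v - ε else if v ∈ tightNbhd G w π X then π v + ε else π v) :
    (∀ v, ∃ k : ℕ, π' v = k * α) ∧
      ∑ v ∈ G.biUnion id, π' v ≤ (∑ v ∈ G.biUnion id, π v) - α := by
  have hπ : ∀ v, π v ∈ multiples α := fun v => mem_multiples_iff_exists_natCast_mul.mpr (hmult v)
  obtain ⟨hεpos, hεα⟩ : 0 < ε ∧ ε ∈ multiples α := by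
    rcases hε.1 with ⟨e, he, -, -, rfl, hslack⟩ | ⟨v, hv, rfl⟩
    · refine ⟨hslack, sub_mem_multiples hα (sum_mem fun x _ => hπ x) ?_ (sub_pos.mp hslack).le⟩
      exact mem_multiples_iff_exists_natCast_mul.mpr (hw e he)
    · exact ⟨hXpos v hv, hπ v⟩
  have hεX : ∀ v ∈ X, ε ≤ π v := fun v hv => hε.2 (Or.inr ⟨v, hv, rfl⟩)
  obtain rfl : π' = dualAdjust X (tightNbhd G w π X) ε π := funext hπ'
  exact ⟨fun v =>
      mem_multiples_iff_exists_natCast_mul.mp (dualAdjust_mem_multiples hα hπ hεα hεX v),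
    sum_dualAdjust_le_sub (disjoint_tightNbhd G w π X) hXV (tightNbhd_subset G w π X) hdef
      (le_of_mem_multiples_of_pos hεα hεpos) hεpos.le π⟩

/-- **Termination invariant of the naive primal-dual algorithm.** If all weights are
integer multiples of `α > 0` and all potential values are nonnegative integer multiples
of `α`, then a dual adjustment step (on a deficient set `X` of positive-potential
vertices, with `ε` the minimum of the positive slacks leaving `X` and the potentials
on `X`) again yields potentials that are nonnegative integer multiples of `α`, and
strictly decreases the total potential by at least `α`; hence the algorithm terminates. -/
theorem naive_pd_adjustment_multiples_and_decrease
    {V : Type*} [DecidableEq V]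
    (G : Finset (Finset V)) (hG : IsGraph G) (L R : Finset V)
    (hLR : Disjoint L R)
    (hbip : ∀ e ∈ G, ∃ u ∈ L, ∃ v ∈ R, e = {u, v})
    (w : Finset V → ℝ) (α : ℝ) (hα : 0 < α)
    (hw : ∀ e ∈ G, ∃ k : ℕ, w e = k * α)
    (π : V → ℝ)
    (hfeas_edge : ∀ e ∈ G, w e ≤ ∑ v ∈ e, π v)
    (hmult : ∀ v, ∃ k : ℕ, π v = k * α)
    (X : Finset V) (hXV : X ⊆ G.biUnion id)
    (hXside : X ⊆ L ∨ X ⊆ R)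
    (hXpos : ∀ v ∈ X, 0 < π v)
    (hdef : (tightNbhd G w π X).card < X.card)
    (ε : ℝ)
    (hε : IsLeast
      {r : ℝ |
        (∃ e ∈ G, (∃ u ∈ e, u ∈ X) ∧ (∃ v ∈ e, v ∉ X ∧ v ∉ tightNbhd G w π X) ∧
          r = (∑ x ∈ e, π x) - w e ∧ 0 < r) ∨
        (∃ v ∈ X, r = π v)} ε)
    (π' : V → ℝ)
    (hπ' : ∀ v, π' v =
      if v ∈ X then π v - ε else if v ∈ tightNbhd G w π X then π v + ε else π v) :
    (∀ v, ∃ k : ℕ, π' v = k * α) ∧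
      ∑ v ∈ G.biUnion id, π' v ≤ (∑ v ∈ G.biUnion id, π v) - α :=
  naive_pd_adjustment_multiples_and_decrease_general G w α hα hw π hmult X hXV hXpos hdef ε hε π'
    hπ'
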